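/- Let G be a finite group acting faithfully and transitively on a finite set Ω with point stabilizer G_ω, and suppose that every subgroup in L(G_ω,G) is core-complementary. Then the lattice L(G_ω,G) is modular, and G satisfies the Jordan–Hölder theorem for imprimitivity systems: any two maximal chains G_ω = A₀ ⋖ A₁ ⋖ ⋯ ⋖ A_k = G and G_ω = B₀ ⋖ B₁ ⋖ ⋯ ⋖ B_m = G in L(G_ω,G) satisfy k = m, and there is a permutation σ of {1,…,k} such that for each i the permutation group A_i // A_{i-1} is permutation equivalent to B_{σ(i)} // B_{σ(i)-1}. -/

import Mathlib

open Pointwise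

/-- A subgroup `A` with `G_ω ≤ A ≤ G` is core-complementary if
`A = G_ω · core_G(A)` as subsets of `G`. -/
def IsCoreComplementary {G Ω : Type*} [Group G] [MulAction G Ω] (ω : Ω)
    (A : Subgroup G) : Prop :=
  (A : Set G) = (MulAction.stabilizer G ω : Set G) * (A.normalCore : Set G)

/-- For subgroups `H ≤ K` of `G`, the permutation group `K // H`: the image of `K` in the
symmetric group of the coset space of `H` in `K`. -/
def quotPermGroup {G : Type*} [Group G] (H K : Subgroup G) :
    Subgroup (Equiv.Perm (K ⧸ H.subgroupOf K)) :=
  (MulAction.toPermHom K (K ⧸ H.subgroupOf K)).range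

/-- Permutation groups `P ≤ Sym(X)` and `Q ≤ Sym(Y)` are permutation equivalent if there
is a bijection `e : X ≃ Y` such that conjugation by `e` maps `P` onto `Q`. -/
def PermEquiv {X Y : Type*} (P : Subgroup (Equiv.Perm X)) (Q : Subgroup (Equiv.Perm Y)) :
    Prop :=
  ∃ e : X ≃ Y, ∀ p : Equiv.Perm X, p ∈ P ↔ (e.symm.trans (p.trans e) : Equiv.Perm Y) ∈ Q

/-- `c : Fin (k+1) → Subgroup G` is a maximal chain of subgroups
`G_ω = c 0 ⋖ c 1 ⋖ ⋯ ⋖ c k = G` in `L(G_ω, G)`. -/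
def IsMaximalSubgroupChain {G : Type*} [Group G] (S : Subgroup G) (k : ℕ)
    (c : Fin (k + 1) → Subgroup G) : Prop :=
  c 0 = S ∧ c (Fin.last k) = ⊤ ∧ ∀ i : Fin k, c i.castSucc ⋖ c i.succ

/-! If every overgroup `A` of `S = G_ω` equals `S · core(A)`, then for `X, Y ≥ S` the join
`X ⊔ Y` is the set product `X · core(Y) = X · Y`; hence Dedekind's law holds above `S` and the
interval `[S, G]` is a modular lattice. Writing `X ⊔ Y = Y · core(X)`, where `core(X)` fixes every
coset of `X`, the natural map `Y/(X ⊓ Y) → (X ⊔ Y)/X` is a bijection intertwining the two actions,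
so `(X ⊔ Y) // X` is permutation equivalent to `Y // (X ⊓ Y)`. The Jordan–Hölder theorem for
modular lattices, with this second isomorphism theorem transporting the factors, gives the
result. -/

namespace PermEquiv

variable {X Y Z : Type*} {P : Subgroup (Equiv.Perm X)} {Q : Subgroup (Equiv.Perm Y)}
  {R : Subgroup (Equiv.Perm Z)}

theorem refl (P : Subgroup (Equiv.Perm X)) : PermEquiv P P :=
  ⟨Equiv.refl X, fun p => by simp⟩

theorem symm (h : PermEquiv P Q) : PermEquiv Q P := by
  obtain ⟨e, he⟩ := h
  refine ⟨e.symm, fun q => ?_⟩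
  have hconj : e.symm.trans ((e.trans (q.trans e.symm)).trans e) = q := by ext; simp
  rw [Equiv.symm_symm, he, hconj]

theorem trans (h₁ : PermEquiv P Q) (h₂ : PermEquiv Q R) : PermEquiv P R := by
  obtain ⟨e₁, he₁⟩ := h₁
  obtain ⟨e₂, he₂⟩ := h₂
  refine ⟨e₁.trans e₂, fun p => ?_⟩
  have hconj : (e₁.trans e₂).symm.trans (p.trans (e₁.trans e₂))
      = e₂.symm.trans ((e₁.symm.trans (p.trans e₁)).trans e₂) := by ext; simp
  rw [hconj, he₁, he₂]

theorem range_toPermHom_of_map_smul {M N : Type*} [Group M] [Group N] [MulAction M X]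
    [MulAction N Y] (f : M →* N) (e : X ≃ Y) (he : ∀ (m : M) (x : X), e (m • x) = f m • e x)
    (hf : ∀ n : N, ∃ m : M, ∀ y : Y, f m • y = n • y) :
    PermEquiv (MulAction.toPermHom M X).range (MulAction.toPermHom N Y).range := by
  refine ⟨e, fun p => ⟨?_, ?_⟩⟩
  · rintro ⟨m, rfl⟩
    exact ⟨f m, Equiv.ext fun y => by simp [he]⟩
  · rintro ⟨n, hn⟩
    obtain ⟨m, hm⟩ := hf n
    refine ⟨m, Equiv.ext fun x => e.injective ?_⟩
    have hnx : n • e x = e (p x) := by simpa using Equiv.ext_iff.mp hn (e x)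
    simp [he, hm, hnx]

end PermEquiv

namespace Subgroup

variable {G : Type*} [Group G] {S X Y Z : Subgroup G}

theorem sup_normalCore_eq_sup (hSX : S ≤ X) (hY : (Y : Set G) = S * Y.normalCore) :
    X ⊔ Y.normalCore = X ⊔ Y := by
  refine le_antisymm (sup_le_sup_left Y.normalCore_le X) (sup_le le_sup_left fun y hy => ?_)
  obtain ⟨s, hs, n, hn, rfl⟩ : y ∈ (S : Set G) * Y.normalCore := hY ▸ hy
  exact mul_mem_sup (hSX hs) hn

theorem coe_sup_eq_mul_normalCore (hSX : S ≤ X) (hY : (Y : Set G) = S * Y.normalCore) :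
    ((X ⊔ Y : Subgroup G) : Set G) = X * Y.normalCore := by
  rw [← sup_normalCore_eq_sup hSX hY, mul_normal]

theorem coe_sup_eq_mul (hSX : S ≤ X) (hY : (Y : Set G) = S * Y.normalCore) :
    ((X ⊔ Y : Subgroup G) : Set G) = X * Y := by
  refine subset_antisymm ?_ ?_
  · rw [coe_sup_eq_mul_normalCore hSX hY]
    exact Set.mul_subset_mul_left Y.normalCore_le
  · rintro _ ⟨x, hx, y, hy, rfl⟩
    exact mul_mem_sup hx hy

theorem sup_inf_le_sup_inf_of_coe_sup_eq_mul (hXY : ((X ⊔ Y : Subgroup G) : Set G) = X * Y)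
    (hXZ : X ≤ Z) : (X ⊔ Y) ⊓ Z ≤ X ⊔ Y ⊓ Z := by
  rintro g ⟨hgXY, hgZ⟩
  obtain ⟨x, hx, y, hy, rfl⟩ : g ∈ (X : Set G) * ↑(Y ⊓ Z) := by
    rw [mul_inf_assoc X Y Z hXZ, ← hXY]
    exact ⟨hgXY, hgZ⟩
  exact mul_mem_sup hx hy

theorem isModularLattice_Ici_of_coe_eq_mul_normalCore
    (hS : ∀ A, S ≤ A → (A : Set G) = S * A.normalCore) : IsModularLattice (Set.Ici S) :=
  ⟨fun {X} Y {_} hXZ => sup_inf_le_sup_inf_of_coe_sup_eq_mul (coe_sup_eq_mul X.2 (hS Y Y.2)) hXZ⟩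

theorem smul_eq_self_of_mem_normalCore {B : Subgroup G} {n : B} (hn : (n : G) ∈ X.normalCore)
    (q : B ⧸ X.subgroupOf B) : n • q = q := by
  induction q using QuotientGroup.induction_on with
  | H c =>
    refine QuotientGroup.eq.mpr (mem_subgroupOf.mpr ?_)
    have := X.normalCore_normal.conj_mem _ (X.normalCore.inv_mem hn) (c : G)⁻¹
    simpa [mul_assoc] using X.normalCore_le this

theorem permEquiv_quotPermGroup_sup (hX : (X : Set G) = S * X.normalCore) (hSY : S ≤ Y) :
    PermEquiv (quotPermGroup X (X ⊔ Y)) (quotPermGroup (X ⊓ Y) Y) := by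
  have hXY : ((X ⊔ Y : Subgroup G) : Set G) = Y * X.normalCore := by
    rw [sup_comm]
    exact coe_sup_eq_mul_normalCore hSY hX
  have hY : Y ≤ X ⊔ Y := le_sup_right
  have hdecomp : ∀ b : ↥(X ⊔ Y), ∃ y : Y, ∃ n : ↥(X ⊔ Y), (n : G) ∈ X.normalCore ∧
      b = inclusion hY y * n := by
    intro b
    obtain ⟨y, hy, n, hn, hb⟩ : (b : G) ∈ (Y : Set G) * X.normalCore := hXY ▸ b.2
    refine ⟨⟨y, hy⟩, ⟨n, ?_⟩, hn, Subtype.ext hb.symm⟩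
    simpa [← hb] using mul_mem (inv_mem (hY hy)) b.2
  let ι := quotientSubgroupOfEmbeddingOfLE X hY ∘ quotientEquivOfEq (inf_subgroupOf_right X Y)
  have hι : Function.Bijective ι := by
    refine ⟨(Function.Embedding.injective _).comp (Equiv.injective _), ?_⟩
    rintro ⟨b⟩
    obtain ⟨y, n, hn, rfl⟩ := hdecomp b
    refine ⟨QuotientGroup.mk y, QuotientGroup.eq.mpr ?_⟩
    simpa [mem_subgroupOf] using X.normalCore_le hn
  refine PermEquiv.symm (PermEquiv.range_toPermHom_of_map_smul (inclusion hY)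
    (Equiv.ofBijective ι hι) (fun y q => ?_) (fun b => ?_))
  · induction q using QuotientGroup.induction_on
    rfl
  · obtain ⟨y, n, hn, rfl⟩ := hdecomp b
    exact ⟨y, fun q => by rw [mul_smul, smul_eq_self_of_mem_normalCore hn]⟩

end Subgroup

theorem inf_covBy_and_inf_covBy_iff_covBy_sup_and_covBy_sup {α : Type*} [Lattice α]
    [IsModularLattice α] {a b : α} : (a ⊓ b ⋖ a ∧ a ⊓ b ⋖ b) ↔ (a ⋖ a ⊔ b ∧ b ⋖ a ⊔ b) :=
  ⟨fun h => ⟨covBy_sup_of_inf_covBy_right h.2, covBy_sup_of_inf_covBy_left h.1⟩,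
    fun h => ⟨inf_covBy_of_covBy_sup_right h.2, inf_covBy_of_covBy_sup_left h.1⟩⟩

theorem Set.Ici.coe_covBy_coe {α : Type*} [PartialOrder α] {a : α} {x y : Set.Ici a} :
    (x : α) ⋖ y ↔ x ⋖ y :=
  Set.OrdConnected.apply_covBy_apply_iff (OrderEmbedding.subtype (a ≤ ·)) <| by
    simpa only [OrderEmbedding.coe_subtype, Subtype.range_coe_subtype] using! Set.ordConnected_Ici

namespace IsMaximalSubgroupChain

variable {G : Type*} [Group G] {S : Subgroup G} {k m : ℕ} {c : Fin (k + 1) → Subgroup G}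
  {d : Fin (m + 1) → Subgroup G}

theorem le (hc : IsMaximalSubgroupChain S k c) (i : Fin (k + 1)) : S ≤ c i := by
  have hmono : Monotone c := Fin.monotone_iff_le_succ.mpr fun j => (hc.2.2 j).le
  exact hc.1 ▸ hmono (Fin.zero_le i)

def toCompositionSeries [IsModularLattice (Set.Ici S)] (hc : IsMaximalSubgroupChain S k c) :
    CompositionSeries (Set.Ici S) where
  length := k
  toFun i := ⟨c i, hc.le i⟩
  step i := Set.Ici.coe_covBy_coe.mp (hc.2.2 i)

theorem exists_perm_permEquiv (hS : ∀ A, S ≤ A → (A : Set G) = S * A.normalCore)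
    (hc : IsMaximalSubgroupChain S k c) (hd : IsMaximalSubgroupChain S m d) :
    ∃ hkm : k = m, ∃ σ : Equiv.Perm (Fin k), ∀ i : Fin k,
      PermEquiv (quotPermGroup (c i.castSucc) (c i.succ))
        (quotPermGroup (d (Fin.cast hkm (σ i)).castSucc) (d (Fin.cast hkm (σ i)).succ)) := by
  have := Subgroup.isModularLattice_Ici_of_coe_eq_mul_normalCore hS
  obtain ⟨f, hf⟩ := CompositionSeries.jordan_holder hc.toCompositionSeries hd.toCompositionSeries
    (Subtype.ext (hc.1.trans hd.1.symm)) (Subtype.ext (hc.2.1.trans hd.2.1.symm))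
  obtain rfl : k = m := Fin.equiv_iff_eq.mp ⟨f⟩
  refine ⟨rfl, f, fun i => JordanHolderLattice.Iso.rel
    (fun (p q : Set.Ici S × Set.Ici S) =>
      PermEquiv (quotPermGroup p.1.1 p.2.1) (quotPermGroup q.1.1 q.2.1))
    (PermEquiv.refl _) PermEquiv.symm PermEquiv.trans
    (fun {x y} _ => Subgroup.permEquiv_quotPermGroup_sup (hS x x.2) y.2) (hf i)⟩

end IsMaximalSubgroupChain

theorem jordan_holder_of_core_complementary_general {G Ω : Type*} [Group G] [MulAction G Ω] (ω : Ω)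
    (hcc : ∀ A : Subgroup G, MulAction.stabilizer G ω ≤ A → IsCoreComplementary ω A) :
    (∀ X Y : Subgroup G, MulAction.stabilizer G ω ≤ X → MulAction.stabilizer G ω ≤ Y →
      ((X ⊓ Y ⋖ X ∧ X ⊓ Y ⋖ Y) ↔ (X ⋖ X ⊔ Y ∧ Y ⋖ X ⊔ Y))) ∧
    (∀ (k m : ℕ) (c : Fin (k + 1) → Subgroup G) (d : Fin (m + 1) → Subgroup G),
      IsMaximalSubgroupChain (MulAction.stabilizer G ω) k c →
      IsMaximalSubgroupChain (MulAction.stabilizer G ω) m d →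
      ∃ hkm : k = m, ∃ σ : Equiv.Perm (Fin k), ∀ i : Fin k,
        PermEquiv (quotPermGroup (c i.castSucc) (c i.succ))
          (quotPermGroup (d (Fin.cast hkm (σ i)).castSucc)
            (d (Fin.cast hkm (σ i)).succ))) := by
  have := Subgroup.isModularLattice_Ici_of_coe_eq_mul_normalCore hcc
  refine ⟨fun X Y hX hY => ?_, fun k m c d hc hd => hc.exists_perm_permEquiv hcc hd⟩
  simpa only [← Set.Ici.coe_covBy_coe, Set.Ici.coe_inf, Set.Ici.coe_sup] using
    inf_covBy_and_inf_covBy_iff_covBy_sup_and_covBy_sup (a := (⟨X, hX⟩ : Set.Ici _)) (b := ⟨Y, hY⟩)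

/-- Let `G` act faithfully and transitively on a finite set `Ω` with point
stabilizer `G_ω`, and suppose every subgroup in `L(G_ω, G)` is core-complementary. Then
`L(G_ω, G)` is modular, and `G` satisfies the Jordan–Hölder theorem for imprimitivity
systems: any two maximal chains `G_ω = A₀ ⋖ ⋯ ⋖ A_k = G` and `G_ω = B₀ ⋖ ⋯ ⋖ B_m = G`
have `k = m` and there is a permutation `σ` of `{1, …, k}` such that `A_i // A_{i-1}` is
permutation equivalent to `B_{σ(i)} // B_{σ(i)-1}` for each `i`. -/
theorem jordan_holder_of_core_complementary {G Ω : Type*} [Group G] [Fintype Ω]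
    [MulAction G Ω] [FaithfulSMul G Ω] (htrans : MulAction.IsPretransitive G Ω)
    (ω : Ω)
    (hcc : ∀ A : Subgroup G, MulAction.stabilizer G ω ≤ A → IsCoreComplementary ω A) :
    (∀ X Y : Subgroup G, MulAction.stabilizer G ω ≤ X → MulAction.stabilizer G ω ≤ Y →
      ((X ⊓ Y ⋖ X ∧ X ⊓ Y ⋖ Y) ↔ (X ⋖ X ⊔ Y ∧ Y ⋖ X ⊔ Y))) ∧
    (∀ (k m : ℕ) (c : Fin (k + 1) → Subgroup G) (d : Fin (m + 1) → Subgroup G),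
      IsMaximalSubgroupChain (MulAction.stabilizer G ω) k c →
      IsMaximalSubgroupChain (MulAction.stabilizer G ω) m d →
      ∃ hkm : k = m, ∃ σ : Equiv.Perm (Fin k), ∀ i : Fin k,
        PermEquiv (quotPermGroup (c i.castSucc) (c i.succ))
          (quotPermGroup (d (Fin.cast hkm (σ i)).castSucc)
            (d (Fin.cast hkm (σ i)).succ))) :=
  jordan_holder_of_core_complementary_general ω hcc
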